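/- arXiv:1611.07724 — 3 statements merged into one kernel-verified Lean document; each statement's English description precedes it below -/
import Mathlib

section
/- For every MKP instance on item set A in which s(a) ≤ c_max for every item a, where c_max = max_{i∈{1,…,m}} c_i, there exists a subset A₂ ⊆ A such that OPT(A₂) = OPT(A) and |A₂| ≤ ∑_{s=1}^{c_max} ⌊(∑_{i=1}^{m} c_i)/s⌋; in particular |A₂| ≤ (∑_{i=1}^{m} c_i)·(ln(c_max) + 1). -/
lemma exists_top {α : Type*} [DecidableEq α] (p : α → ℕ) (B : Finset α) (k : ℕ) :
    ∃ Top, Top ⊆ B ∧ Top.card = min k B.card ∧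
      ∀ x ∈ B, x ∉ Top → ∀ y ∈ Top, p x ≤ p y := by
  induction k generalizing B with
  | zero => exact ⟨∅, by simp⟩
  | succ k ih =>
    rcases B.eq_empty_or_nonempty with rfl | hne
    · exact ⟨∅, by simp⟩
    obtain ⟨y, hyB, hymax⟩ := B.exists_max_image p hne
    obtain ⟨Top', hsub, hcard, hdom⟩ := ih (B.erase y)
    refine ⟨insert y Top', ?_, ?_, ?_⟩
    · exact Finset.insert_subset hyB (hsub.trans (Finset.erase_subset _ _))
    · have hy' : y ∉ Top' := fun h => (Finset.mem_erase.mp (hsub h)).1 rfl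
      rw [Finset.card_insert_of_notMem hy', hcard, Finset.card_erase_of_mem hyB]
      have : 1 ≤ B.card := Finset.card_pos.mpr hne
      omega
    · intro x hxB hx z hz
      rcases Finset.mem_insert.mp hz with rfl | hz'
      · exact hymax x hxB
      · refine hdom x ?_ (fun h => hx (Finset.mem_insert_of_mem h)) z hz'
        exact Finset.mem_erase.mpr ⟨fun h => hx (h ▸ Finset.mem_insert_self _ _), hxB⟩

lemma exists_inj_dominating {α : Type*} [DecidableEq α] (p : α → ℕ) (S Top : Finset α)
    (hcard : S.card ≤ Top.card)
    (hdom : ∀ x ∈ S, x ∉ Top → ∀ y ∈ Top, p x ≤ p y) :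
    ∃ f : α → α, Set.InjOn f S ∧ ∀ x ∈ S, f x ∈ Top ∧ p x ≤ p (f x) := by
  have e1 := Finset.card_sdiff_add_card_inter S Top
  have e2 := Finset.card_sdiff_add_card_inter Top S
  rw [Finset.inter_comm] at e2
  have hle : (S \ Top).card ≤ (Top \ S).card := by omega
  have eS := (S \ Top).equivFin
  have eT := (Top \ S).equivFin
  classical
  set f : α → α := fun x => if h : x ∈ S \ Top
    then (eT.symm (Fin.castLE hle (eS ⟨x, h⟩)) : α) else x with hf
  have hmap : ∀ x ∈ S, f x ∈ Top ∧ p x ≤ p (f x) := by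
    intro x hx
    by_cases h : x ∈ S \ Top
    · have hfx : f x ∈ Top \ S := by
        simp only [hf, dif_pos h]; exact (eT.symm _).2
      have hT := (Finset.mem_sdiff.mp hfx).1
      exact ⟨hT, hdom x hx (Finset.mem_sdiff.mp h).2 _ hT⟩
    · have hx' : x ∈ Top := by
        by_contra hxT
        exact h (Finset.mem_sdiff.mpr ⟨hx, hxT⟩)
      simp only [hf, dif_neg h]
      exact ⟨hx', le_rfl⟩
  refine ⟨f, ?_, hmap⟩
  intro x hx y hy hxy
  by_cases h1 : x ∈ S \ Top <;> by_cases h2 : y ∈ S \ Top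
  · simp only [hf, dif_pos h1, dif_pos h2] at hxy
    have h3 := eT.symm.injective (Subtype.ext hxy)
    have h4 : (eS ⟨x, h1⟩ : ℕ) = (eS ⟨y, h2⟩ : ℕ) := by
      simpa using congrArg Fin.val h3
    have h5 := eS.injective (Fin.ext h4)
    simpa using h5
  · simp only [hf, dif_pos h1, dif_neg h2] at hxy
    have hfx : (eT.symm (Fin.castLE hle (eS ⟨x, h1⟩)) : α) ∈ Top \ S := (eT.symm _).2
    rw [hxy] at hfx
    exact absurd hy (Finset.mem_sdiff.mp hfx).2
  · simp only [hf, dif_neg h1, dif_pos h2] at hxy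
    have hfy : (eT.symm (Fin.castLE hle (eS ⟨y, h2⟩)) : α) ∈ Top \ S := (eT.symm _).2
    rw [← hxy] at hfy
    exact absurd hx (Finset.mem_sdiff.mp hfy).2
  · simp only [hf, dif_neg h1, dif_neg h2] at hxy
    exact hxy


/-- The optimal value of a multiple knapsack instance restricted to the items of `A`:
the maximum total profit of a family of `m` pairwise disjoint subsets of `A` in which
the `i`-th subset has total size at most `c i`. -/
noncomputable def MKPopt {α : Type*} (A : Finset α) (p s : α → ℕ) (m : ℕ)
    (c : Fin m → ℕ) : ℕ :=
  sSup { v | ∃ T : Fin m → Finset α, (∀ i, T i ⊆ A) ∧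
    (∀ i j, i ≠ j → Disjoint (T i) (T j)) ∧
    (∀ i, ∑ a ∈ T i, s a ≤ c i) ∧ v = ∑ i, ∑ a ∈ T i, p a }

/-- Every MKP instance in which every item fits into the largest knapsack has a reduced
instance `A₂ ⊆ A` with the same optimal value and at most
`∑_{t=1}^{c_max} ⌊(∑_i c i)/t⌋ ≤ (∑_i c i)·(ln(c_max) + 1)` items. -/
theorem MKP_reduced_instance {α : Type*} (A : Finset α) (p s : α → ℕ) (m : ℕ) (hm : 0 < m)
    (c : Fin m → ℕ)
    (hp : ∀ a ∈ A, 1 ≤ p a) (hs : ∀ a ∈ A, 1 ≤ s a) (hc : ∀ i, 1 ≤ c i)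
    (hfit : ∀ a ∈ A, s a ≤ Finset.univ.sup c) :
    ∃ A₂ ⊆ A, MKPopt A₂ p s m c = MKPopt A p s m c ∧
      A₂.card ≤ ∑ t ∈ Finset.Icc 1 (Finset.univ.sup c), (∑ i, c i) / t ∧
      (A₂.card : ℝ) ≤ ((∑ i, c i : ℕ) : ℝ) * (Real.log ((Finset.univ.sup c : ℕ) : ℝ) + 1) := by
  classical
  set cmax := Finset.univ.sup c with hcmax
  set C := ∑ i, c i with hCdef
  set cls : ℕ → Finset α := fun t => A.filter (fun a => s a = t) with hcls
  have hTopEx : ∀ t, ∃ Top, Top ⊆ cls t ∧ Top.card = min (C / t) (cls t).card ∧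
      ∀ x ∈ cls t, x ∉ Top → ∀ y ∈ Top, p x ≤ p y := fun t => exists_top p (cls t) (C / t)
  choose Top hTsub hTcard hTdom using hTopEx
  refine ⟨(Finset.Icc 1 cmax).biUnion Top, ?_, ?_, ?_, ?_⟩
  · intro x hx
    obtain ⟨t, _, hxt⟩ := Finset.mem_biUnion.mp hx
    exact (Finset.filter_subset _ _) (hTsub t hxt)
  · -- MKPopt equality
    set A₂ := (Finset.Icc 1 cmax).biUnion Top with hA₂
    have hA₂A : A₂ ⊆ A := by
      intro x hx
      obtain ⟨t, _, hxt⟩ := Finset.mem_biUnion.mp hx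
      exact (Finset.filter_subset _ _) (hTsub t hxt)
    set P : Finset α → Set ℕ := fun B => {v | ∃ T : Fin m → Finset α, (∀ i, T i ⊆ B) ∧
        (∀ i j, i ≠ j → Disjoint (T i) (T j)) ∧
        (∀ i, ∑ a ∈ T i, s a ≤ c i) ∧ v = ∑ i, ∑ a ∈ T i, p a} with hP
    have hMK : ∀ B : Finset α, MKPopt B p s m c = sSup (P B) := fun B => rfl
    have hPne : ∀ B : Finset α, (P B).Nonempty := by
      intro B
      exact ⟨0, ⟨fun _ => ∅, fun _ => Finset.empty_subset _, fun _ _ _ => by simp,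
        fun i => by simp, by simp⟩⟩
    have hPbdd : ∀ B : Finset α, BddAbove (P B) := by
      intro B
      refine ⟨∑ a ∈ B, p a, ?_⟩
      rintro v ⟨T, h1, h2, h3, rfl⟩
      rw [← Finset.sum_biUnion (fun i _ j _ hij => h2 i j hij)]
      exact Finset.sum_le_sum_of_subset (Finset.biUnion_subset.mpr (fun i _ => h1 i))
    have hle : MKPopt A₂ p s m c ≤ MKPopt A p s m c := by
      rw [hMK, hMK]
      refine csSup_le_csSup (hPbdd A) (hPne A₂) ?_
      rintro v ⟨T, h1, h2, h3, h4⟩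
      exact ⟨T, fun i => (h1 i).trans hA₂A, h2, h3, h4⟩
    have hge : MKPopt A p s m c ≤ MKPopt A₂ p s m c := by
      have hopt : MKPopt A p s m c ∈ P A := by
        rw [hMK]; exact Nat.sSup_mem (hPne A) (hPbdd A)
      obtain ⟨T, h1, h2, h3, h4⟩ := hopt
      set U : Finset α := Finset.univ.biUnion T with hU
      have hUA : U ⊆ A := Finset.biUnion_subset.mpr (fun i _ => h1 i)
      have hUsize : ∑ a ∈ U, s a ≤ C := by
        rw [hU, Finset.sum_biUnion (fun i _ j _ hij => h2 i j hij)]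
        exact Finset.sum_le_sum (fun i _ => h3 i)
      set St : ℕ → Finset α := fun t => U.filter (fun a => s a = t) with hSt
      have hStsub : ∀ t, St t ⊆ cls t := fun t => Finset.filter_subset_filter _ hUA
      have hStcard : ∀ t, (St t).card ≤ (Top t).card := by
        intro t
        rcases Nat.eq_zero_or_pos t with rfl | ht
        · have : St 0 = ∅ := by
            rw [Finset.eq_empty_iff_forall_notMem]
            intro x hx
            have h0 := (Finset.mem_filter.mp hx).2
            have := hs x (hUA (Finset.mem_filter.mp hx).1)
            omega
          simp [this]
        · have hsum : ∑ a ∈ St t, s a = (St t).card * t := by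
            rw [Finset.sum_congr rfl (fun a ha => (Finset.mem_filter.mp ha).2),
              Finset.sum_const, smul_eq_mul]
          have hle2 : (St t).card * t ≤ C :=
            hsum ▸ (Finset.sum_le_sum_of_subset (Finset.filter_subset _ _)).trans hUsize
          have hcd : (St t).card ≤ C / t := (Nat.le_div_iff_mul_le ht).mpr hle2
          rw [hTcard t]
          exact le_min hcd (Finset.card_le_card (hStsub t))
      have hfEx : ∀ t, ∃ f : α → α, Set.InjOn f (St t) ∧
          ∀ x ∈ St t, f x ∈ Top t ∧ p x ≤ p (f x) :=
        fun t => exists_inj_dominating p (St t) (Top t) (hStcard t)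
          (fun x hx hxT y hy => hTdom t x (hStsub t hx) hxT y hy)
      choose f hfinj hfmap using hfEx
      set F : α → α := fun x => f (s x) x with hF
      have hUmem : ∀ x ∈ U, x ∈ St (s x) := fun x hx => Finset.mem_filter.mpr ⟨hx, rfl⟩
      have hFkey : ∀ x ∈ U, F x ∈ Top (s x) ∧ p x ≤ p (F x) :=
        fun x hx => hfmap (s x) x (hUmem x hx)
      have hFs : ∀ x ∈ U, s (F x) = s x :=
        fun x hx => (Finset.mem_filter.mp (hTsub (s x) (hFkey x hx).1)).2
      have hFA₂ : ∀ x ∈ U, F x ∈ A₂ := by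
        intro x hx
        refine Finset.mem_biUnion.mpr ⟨s x, ?_, (hFkey x hx).1⟩
        exact Finset.mem_Icc.mpr ⟨hs x (hUA hx), hfit x (hUA hx)⟩
      have hFinj : Set.InjOn F U := by
        intro x hx y hy hxy
        have hsx : s x = s y := by
          rw [← hFs x hx, ← hFs y hy, hxy]
        have hxS : x ∈ St (s x) := hUmem x hx
        have hyS : y ∈ St (s x) := hsx ▸ hUmem y hy
        have : f (s x) x = f (s x) y := by
          simpa only [hF, hsx] using hxy
        exact hfinj (s x) hxS hyS this
      have hTiU : ∀ i, T i ⊆ U := fun i => Finset.subset_biUnion_of_mem T (Finset.mem_univ i)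
      have hinjTi : ∀ i, ∀ x ∈ T i, ∀ y ∈ T i, F x = F y → x = y :=
        fun i x hx y hy => hFinj (hTiU i hx) (hTiU i hy)
      have hval : (∑ i, ∑ a ∈ (T i).image F, p a) ∈ P A₂ := by
        refine ⟨fun i => (T i).image F, ?_, ?_, ?_, rfl⟩
        · intro i
          intro z hz
          obtain ⟨x, hx, rfl⟩ := Finset.mem_image.mp hz
          exact hFA₂ x (hTiU i hx)
        · intro i j hij
          rw [Finset.disjoint_left]
          rintro z hzi hzj
          obtain ⟨x, hx, rfl⟩ := Finset.mem_image.mp hzi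
          obtain ⟨y, hy, hxy⟩ := Finset.mem_image.mp hzj
          have : y = x := hFinj (hTiU j hy) (hTiU i hx) hxy
          subst this
          exact Finset.disjoint_left.mp (h2 i j hij) hx hy
        · intro i
          rw [Finset.sum_image (hinjTi i)]
          calc ∑ x ∈ T i, s (F x) = ∑ x ∈ T i, s x :=
                Finset.sum_congr rfl (fun x hx => hFs x (hTiU i hx))
            _ ≤ c i := h3 i
      have hvge : MKPopt A p s m c ≤ ∑ i, ∑ a ∈ (T i).image F, p a := by
        rw [h4]
        refine Finset.sum_le_sum (fun i _ => ?_)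
        rw [Finset.sum_image (hinjTi i)]
        exact Finset.sum_le_sum (fun x hx => (hFkey x (hTiU i hx)).2)
      calc MKPopt A p s m c ≤ ∑ i, ∑ a ∈ (T i).image F, p a := hvge
        _ ≤ sSup (P A₂) := le_csSup (hPbdd A₂) hval
        _ = MKPopt A₂ p s m c := (hMK A₂).symm
    exact le_antisymm hle hge
  · refine (Finset.card_biUnion_le).trans ?_
    refine Finset.sum_le_sum (fun t _ => ?_)
    rw [hTcard t]
    exact min_le_left _ _
  · have hcard2 : ((Finset.Icc 1 cmax).biUnion Top).card ≤ ∑ t ∈ Finset.Icc 1 cmax, C / t := by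
      refine (Finset.card_biUnion_le).trans ?_
      refine Finset.sum_le_sum (fun t _ => ?_)
      rw [hTcard t]
      exact min_le_left _ _
    calc (((Finset.Icc 1 cmax).biUnion Top).card : ℝ)
        ≤ ((∑ t ∈ Finset.Icc 1 cmax, C / t : ℕ) : ℝ) := Nat.cast_le.mpr hcard2
      _ = ∑ t ∈ Finset.Icc 1 cmax, ((C / t : ℕ) : ℝ) := by push_cast; ring
      _ ≤ ∑ t ∈ Finset.Icc 1 cmax, (C : ℝ) / (t : ℝ) :=
          Finset.sum_le_sum (fun t _ => Nat.cast_div_le)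
      _ = (C : ℝ) * ∑ t ∈ Finset.Icc 1 cmax, ((t : ℝ))⁻¹ := by
          rw [Finset.mul_sum]; simp [div_eq_mul_inv]
      _ = (C : ℝ) * ((harmonic cmax : ℚ) : ℝ) := by
          rw [harmonic_eq_sum_Icc]; push_cast; ring
      _ ≤ (C : ℝ) * (1 + Real.log cmax) :=
          mul_le_mul_of_nonneg_left (harmonic_le_one_add_log cmax) (by positivity)
      _ = (C : ℝ) * (Real.log cmax + 1) := by ring
end

section
/- For every MKP instance on item set A and every positive integer k, there exists a subset A₂ ⊆ A with |A₂| ≤ ∑_{p=1}^{k} ⌈k/p⌉ such that the instance restricted to A₂ has a feasible solution of profit at least k if and only if the original instance has a feasible solution of profit at least k. -/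
open scoped Classical

/-- For every MKP instance and positive integer `k` there is a reduced set of items
`A₂ ⊆ A` with `|A₂| ≤ ∑_{t=1}^{k} ⌈k/t⌉` such that the restricted instance has a
feasible solution of profit at least `k` iff the original instance does. -/
theorem MKP_profit_reduced_instance {α : Type*} (A : Finset α) (p s : α → ℕ)
    (m : ℕ) (hm : 0 < m) (c : Fin m → ℕ)
    (hp : ∀ a ∈ A, 1 ≤ p a) (hs : ∀ a ∈ A, 1 ≤ s a) (hc : ∀ i, 1 ≤ c i)
    (k : ℕ) (hk : 1 ≤ k) :
    ∃ A₂ ⊆ A, A₂.card ≤ ∑ t ∈ Finset.Icc 1 k, ⌈(k : ℚ) / t⌉₊ ∧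
      ((∃ T : Fin m → Finset α, (∀ i, T i ⊆ A₂) ∧
          (∀ i j, i ≠ j → Disjoint (T i) (T j)) ∧
          (∀ i, ∑ a ∈ T i, s a ≤ c i) ∧
          k ≤ ∑ i, ∑ a ∈ T i, p a) ↔
        (∃ T : Fin m → Finset α, (∀ i, T i ⊆ A) ∧
          (∀ i j, i ≠ j → Disjoint (T i) (T j)) ∧
          (∀ i, ∑ a ∈ T i, s a ≤ c i) ∧
          k ≤ ∑ i, ∑ a ∈ T i, p a)) := by
  classical
  by_cases H : ∃ T : Fin m → Finset α, (∀ i, T i ⊆ A) ∧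
      (∀ i j, i ≠ j → Disjoint (T i) (T j)) ∧
      (∀ i, ∑ a ∈ T i, s a ≤ c i) ∧ k ≤ ∑ i, ∑ a ∈ T i, p a
  · -- pick a solution with minimal total cardinality
    have hex : ∃ n : ℕ, ∃ T : Fin m → Finset α, ((∀ i, T i ⊆ A) ∧
        (∀ i j, i ≠ j → Disjoint (T i) (T j)) ∧
        (∀ i, ∑ a ∈ T i, s a ≤ c i) ∧ k ≤ ∑ i, ∑ a ∈ T i, p a) ∧
        ∑ i, (T i).card = n := by
      obtain ⟨T, hT⟩ := H; exact ⟨_, T, hT, rfl⟩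
    obtain ⟨T, ⟨hTA, hTdisj, hTsize, hTprof⟩, hTcard⟩ := Nat.find_spec hex
    have hmin : ∀ T' : Fin m → Finset α, ((∀ i, T' i ⊆ A) ∧
        (∀ i j, i ≠ j → Disjoint (T' i) (T' j)) ∧
        (∀ i, ∑ a ∈ T' i, s a ≤ c i) ∧ k ≤ ∑ i, ∑ a ∈ T' i, p a) →
        Nat.find hex ≤ ∑ i, (T' i).card := by
      intro T' hT'
      exact Nat.find_le ⟨T', hT', rfl⟩
    set U : Finset α := Finset.univ.biUnion T with hU
    have hUA : U ⊆ A := by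
      intro a ha
      rw [hU, Finset.mem_biUnion] at ha
      obtain ⟨i, _, hi⟩ := ha
      exact hTA i hi
    refine ⟨U, hUA, ?_, ?_⟩
    · -- cardinality bound
      have hUcard : U.card = ∑ i, (T i).card :=
        Finset.card_biUnion (fun i _ j _ hij => hTdisj i j hij)
      set f : α → ℕ := fun a => min (p a) k with hf
      have hfmem : ∀ a ∈ U, f a ∈ Finset.Icc 1 k := by
        intro a ha
        have h1 : 1 ≤ p a := hp a (hUA ha)
        simp only [hf, Finset.mem_Icc]
        exact ⟨le_min h1 hk, min_le_right _ _⟩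
      have hfib := Finset.card_eq_sum_card_fiberwise hfmem
      rw [hfib]
      apply Finset.sum_le_sum
      intro t ht
      by_contra hcon
      push_neg at hcon
      -- the fiber at t has more than ⌈k/t⌉ elements; remove one item
      set r : ℕ := ⌈(k : ℚ) / t⌉₊ with hr
      have ht1 : 1 ≤ t := (Finset.mem_Icc.mp ht).1
      have hrt : k ≤ r * t := by
        have h1 : (k : ℚ) / t ≤ r := Nat.le_ceil _
        have ht0 : (0 : ℚ) < t := by exact_mod_cast ht1
        rw [div_le_iff₀ ht0] at h1
        exact_mod_cast h1
      set F : Finset α := U.filter (fun a => f a = t) with hF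
      have hFne : F.Nonempty := Finset.card_pos.mp (by omega)
      obtain ⟨a, haF⟩ := hFne
      have haU : a ∈ U := (Finset.mem_filter.mp haF).1
      rw [hU, Finset.mem_biUnion] at haU
      obtain ⟨i₀, _, hai₀⟩ := haU
      set T' : Fin m → Finset α := Function.update T i₀ ((T i₀).erase a) with hT'
      have hsub : ∀ i, T' i ⊆ T i := by
        intro i
        rcases eq_or_ne i i₀ with rfl | h
        · rw [hT', Function.update_self]; exact Finset.erase_subset _ _
        · rw [hT', Function.update_of_ne h]
      have hQT' : (∀ i, T' i ⊆ A) ∧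
          (∀ i j, i ≠ j → Disjoint (T' i) (T' j)) ∧
          (∀ i, ∑ a ∈ T' i, s a ≤ c i) ∧ k ≤ ∑ i, ∑ a ∈ T' i, p a := by
        refine ⟨fun i => (hsub i).trans (hTA i),
          fun i j hij => ((hTdisj i j hij).mono (hsub i) (hsub j)),
          fun i => le_trans (Finset.sum_le_sum_of_subset (hsub i)) (hTsize i), ?_⟩
        -- profit stays at least k
        set S : Finset α := F.erase a with hS
        have hScard : r ≤ S.card := by
          rw [hS, Finset.card_erase_of_mem haF]; omega
        have hSU' : S ⊆ Finset.univ.biUnion T' := by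
          intro x hx
          have hxa : x ≠ a := Finset.ne_of_mem_erase hx
          have hxU : x ∈ U := (Finset.mem_filter.mp (Finset.mem_of_mem_erase hx)).1
          rw [hU, Finset.mem_biUnion] at hxU
          obtain ⟨j, _, hxj⟩ := hxU
          rw [Finset.mem_biUnion]
          refine ⟨j, Finset.mem_univ j, ?_⟩
          rcases eq_or_ne j i₀ with rfl | h
          · rw [hT', Function.update_self]; exact Finset.mem_erase.mpr ⟨hxa, hxj⟩
          · rw [hT', Function.update_of_ne h]; exact hxj
        have hdisj' : ∀ i ∈ (Finset.univ : Finset (Fin m)), ∀ j ∈ Finset.univ,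
            i ≠ j → Disjoint (T' i) (T' j) :=
          fun i _ j _ hij => (hTdisj i j hij).mono (hsub i) (hsub j)
        have hsum : ∑ i, ∑ a ∈ T' i, p a = ∑ a ∈ Finset.univ.biUnion T', p a :=
          (Finset.sum_biUnion hdisj').symm
        have hpt : ∀ x ∈ S, t ≤ p x := by
          intro x hx
          have hxF : x ∈ F := Finset.mem_of_mem_erase hx
          have : f x = t := (Finset.mem_filter.mp hxF).2
          have h2 : min (p x) k = t := this
          have h3 := min_le_left (p x) k
          omega
        have h4 : S.card * t ≤ ∑ x ∈ S, p x := by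
          simpa [smul_eq_mul] using Finset.card_nsmul_le_sum S p t hpt
        have h5 : ∑ x ∈ S, p x ≤ ∑ a ∈ Finset.univ.biUnion T', p a :=
          Finset.sum_le_sum_of_subset hSU'
        have h6 : r * t ≤ S.card * t := Nat.mul_le_mul_right t hScard
        omega
      have hlt : ∑ i, (T' i).card < ∑ i, (T i).card := by
        have h1 : ∀ i, (T' i).card =
            Function.update (fun i => (T i).card) i₀ (((T i₀).erase a).card) i := by
          intro i
          rcases eq_or_ne i i₀ with rfl | h
          · rw [hT', Function.update_self, Function.update_self]
          · rw [hT', Function.update_of_ne h, Function.update_of_ne h]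
        rw [Finset.sum_congr rfl (fun i _ => h1 i),
          Finset.sum_update_of_mem (Finset.mem_univ i₀),
          Finset.sdiff_singleton_eq_erase]
        have h2 : ∑ i, (T i).card =
            (T i₀).card + ∑ i ∈ Finset.univ.erase i₀, (T i).card := by
          rw [← Finset.add_sum_erase _ _ (Finset.mem_univ i₀)]
        rw [h2, Finset.card_erase_of_mem hai₀]
        have h3 : 1 ≤ (T i₀).card := Finset.card_pos.mpr ⟨a, hai₀⟩
        omega
      have := hmin T' hQT'
      omega
    · constructor
      · rintro ⟨T', h1, h2, h3, h4⟩
        exact ⟨T', fun i => (h1 i).trans hUA, h2, h3, h4⟩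
      · intro _
        exact ⟨T, fun i => Finset.subset_biUnion_of_mem T (Finset.mem_univ i),
          hTdisj, hTsize, hTprof⟩
  · refine ⟨∅, Finset.empty_subset A, by simp, ?_⟩
    constructor
    · rintro ⟨T, h1, h2, h3, h4⟩
      exact absurd ⟨T, fun i => (h1 i).trans (Finset.empty_subset A), h2, h3, h4⟩ H
    · intro h
      exact absurd h H
end

section
/- Let B(i) denote the i-th Bell number, i.e. the number of partitions of a set with i elements into nonempty pairwise disjoint blocks. For all positive integers k and n with k ≤ n, ∑_{i=1}^{k} C(n,i)·B(i) ≤ n^k · B(k+1), where C(n,i) denotes the binomial coefficient. -/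
/-!
Adding the singleton block `{i}` to a partition of `{0, …, i-1}` gives a partition of
`{0, …, i}`, injectively, so `B` is monotone and `B(i) ≤ B(k+1)` for `i ≤ k`. It remains to
bound `∑_{i=1}^{k} C(n,i) ≤ n^k`: every nonempty set of at most `k` elements of `Fin n` is the
image of some map `Fin k → Fin n`.
-/

/-- The `i`-th Bell number: the number of partitions of a set with `i` elements into
nonempty pairwise disjoint blocks covering the whole set. -/
def bell (i : ℕ) : ℕ :=
  (((Finset.univ : Finset (Fin i)).powerset.powerset).filter
    (fun P => (∀ b ∈ P, b.Nonempty) ∧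
      (∀ b ∈ P, ∀ b' ∈ P, b ≠ b' → Disjoint b b') ∧
      P.biUnion id = Finset.univ)).card

open Finset

abbrev IsFinsetPartition {α : Type*} [Fintype α] [DecidableEq α] (P : Finset (Finset α)) :
    Prop :=
  (∀ b ∈ P, b.Nonempty) ∧ (∀ b ∈ P, ∀ b' ∈ P, b ≠ b' → Disjoint b b') ∧
    P.biUnion id = univ

theorem bell_eq_card_isFinsetPartition (i : ℕ) :
    bell i = #{P : Finset (Finset (Fin i)) | IsFinsetPartition P} := by
  rw [bell, powerset_univ, powerset_univ]

namespace Fin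

def insertLastBlock {i : ℕ} (P : Finset (Finset (Fin i))) : Finset (Finset (Fin (i + 1))) :=
  insert {last i} (P.image (map castSuccEmb))

variable {i : ℕ}

theorem last_notMem_map_castSuccEmb (b : Finset (Fin i)) : last i ∉ b.map castSuccEmb := by
  simp [(castSucc_lt_last _).ne]

theorem singleton_last_notMem_image_map_castSuccEmb (P : Finset (Finset (Fin i))) :
    {last i} ∉ P.image (map castSuccEmb) := by
  intro hmem
  obtain ⟨b, -, hb⟩ := mem_image.1 hmem
  exact last_notMem_map_castSuccEmb b (hb ▸ mem_singleton_self _)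

theorem insertLastBlock_injective : Function.Injective (insertLastBlock (i := i)) := by
  intro P Q hPQ
  have hblocks := congrArg (erase · {last i}) hPQ
  simp only [insertLastBlock,
    erase_insert (singleton_last_notMem_image_map_castSuccEmb _)] at hblocks
  exact image_injective (map_injective _) hblocks

theorem isFinsetPartition_insertLastBlock {P : Finset (Finset (Fin i))}
    (hP : IsFinsetPartition P) :
    IsFinsetPartition (insertLastBlock P) := by
  obtain ⟨hne, hdisj, hcov⟩ := hP
  have disjoint_last (b : Finset (Fin i)) : Disjoint {last i} (b.map castSuccEmb) :=
    disjoint_singleton_left.2 (last_notMem_map_castSuccEmb b)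
  refine ⟨?_, ?_, ?_⟩
  · simp only [insertLastBlock, mem_insert, mem_image, forall_eq_or_imp, singleton_nonempty,
      true_and, forall_exists_index, and_imp, forall_apply_eq_imp_iff₂]
    exact fun b hb => (hne b hb).map
  · simp only [insertLastBlock, mem_insert, mem_image]
    rintro _ (rfl | ⟨b, hb, rfl⟩) _ (rfl | ⟨b', hb', rfl⟩) hbb'
    · exact absurd rfl hbb'
    · exact disjoint_last b'
    · exact (disjoint_last b).symm
    · exact (disjoint_map _).2 (hdisj b hb b' hb' fun h => hbb' (h ▸ rfl))
  · refine eq_univ_of_forall fun x => ?_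
    simp only [insertLastBlock, biUnion_insert, id, mem_union, mem_singleton, mem_biUnion,
      mem_image, exists_exists_and_eq_and, mem_map]
    rcases eq_castSucc_or_eq_last x with ⟨y, rfl⟩ | rfl
    · obtain ⟨b, hb, hyb⟩ := mem_biUnion.1 (hcov ▸ mem_univ y)
      exact Or.inr ⟨b, hb, y, hyb, rfl⟩
    · exact Or.inl rfl

end Fin

theorem bell_le_bell_succ (i : ℕ) : bell i ≤ bell (i + 1) := by
  simp only [bell_eq_card_isFinsetPartition]
  refine card_le_card_of_injOn Fin.insertLastBlock (fun P hP => ?_)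
    Fin.insertLastBlock_injective.injOn
  simpa using Fin.isFinsetPartition_insertLastBlock (mem_filter.1 hP).2

theorem bell_mono : Monotone bell := monotone_nat_of_le_succ bell_le_bell_succ

theorem Finset.exists_image_univ_eq {α β : Type*} [DecidableEq α] [Fintype β] {s : Finset α}
    (hs : s.Nonempty) (hcard : #s ≤ Fintype.card β) : ∃ f : β → α, univ.image f = s := by
  obtain ⟨e⟩ : Nonempty (s ↪ β) :=
    Function.Embedding.nonempty_of_card_le (by simpa using hcard)
  have : Nonempty s := hs.to_subtype
  refine ⟨Subtype.val ∘ Function.invFun e, ?_⟩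
  ext a
  simp only [mem_image, mem_univ, true_and, Function.comp_apply]
  refine ⟨fun ⟨b, hb⟩ => hb ▸ (Function.invFun e b).2, fun ha => ?_⟩
  obtain ⟨b, hb⟩ := Function.invFun_surjective e.injective ⟨a, ha⟩
  exact ⟨b, by rw [hb]⟩

theorem sum_Icc_choose_le_pow (n k : ℕ) : ∑ i ∈ Icc 1 k, n.choose i ≤ n ^ k := by
  calc ∑ i ∈ Icc 1 k, n.choose i
      = #((Icc 1 k).sigma fun i => powersetCard i (univ : Finset (Fin n))) := by simp [card_sigma]
    _ ≤ #(univ : Finset (Fin k → Fin n)) :=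
        card_le_card_of_surjOn (fun f => ⟨#(univ.image f), univ.image f⟩) ?_
    _ = n ^ k := by simp
  rintro ⟨i, s⟩ hs
  simp only [coe_sigma, Set.mem_sigma_iff, coe_Icc, Set.mem_Icc, mem_coe,
    mem_powersetCard_univ] at hs
  obtain ⟨⟨hi, hik⟩, rfl⟩ := hs
  obtain ⟨f, hf⟩ := exists_image_univ_eq (β := Fin k) (card_pos.1 hi) (by simpa using hik)
  exact ⟨f, mem_coe.2 (mem_univ f), by simp only [hf]⟩

theorem sum_choose_bell_le_general (k n : ℕ) :
    ∑ i ∈ Finset.Icc 1 k, Nat.choose n i * bell i ≤ n ^ k * bell (k + 1) :=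
  calc ∑ i ∈ Icc 1 k, n.choose i * bell i
      ≤ ∑ i ∈ Icc 1 k, n.choose i * bell (k + 1) :=
        sum_le_sum fun i hi => Nat.mul_le_mul_left _ (bell_mono (by grind))
    _ = (∑ i ∈ Icc 1 k, n.choose i) * bell (k + 1) := (sum_mul ..).symm
    _ ≤ n ^ k * bell (k + 1) := Nat.mul_le_mul_right _ (sum_Icc_choose_le_pow n k)

/-- For all positive integers `k ≤ n`, `∑_{i=1}^{k} C(n,i)·B(i) ≤ n^k · B(k+1)`,
where `B` is the Bell number and `C` the binomial coefficient. -/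
theorem sum_choose_bell_le (k n : ℕ) (hk : 0 < k) (hn : k ≤ n) :
    ∑ i ∈ Finset.Icc 1 k, Nat.choose n i * bell i ≤ n ^ k * bell (k + 1) :=
  sum_choose_bell_le_general k n
end
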